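/- For every even integer n ≥ 4, there exists a family of n/2 complete 3-partite 3-uniform hypergraphs on vertex set Z_n such that every 3-element subset of Z_n is contained in an odd number of members of the family. -/

import Mathlib

open Finset

/-- `e` is an edge of the complete `r`-partite `r`-graph with parts `P 0, ..., P (r-1)`:
it meets every part in exactly one vertex. -/
def IsEdge {α : Type*} [DecidableEq α] {r : ℕ} (P : Fin r → Finset α) (e : Finset α) : Prop :=
  ∀ i, (e ∩ P i).card = 1

instance {α : Type*} [DecidableEq α] {r : ℕ} (P : Fin r → Finset α) (e : Finset α) :
    Decidable (IsEdge P e) :=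
  inferInstanceAs (Decidable (∀ _, _))

/-- Label of vertex with position `k` (in `0..2m-1`) in the `i`-th hypergraph. -/
def lab (m i k : ℕ) : ℕ :=
  if k < m then (if i < k then 2 else if i = k then 1 else 0)
  else (if i < k - m then 0 else if i = k - m then 1 else 2)

lemma lab_lt3 (m i k : ℕ) : lab m i k < 3 := by
  unfold lab; split_ifs <;> (try simp_all) <;> omega

lemma filter_aa {m p q : ℕ} (hpq : p < q) (hq : q < m) :
    ((Finset.range m).filter (fun i => lab m i p ≠ lab m i q)) = Finset.Icc p q := by
  ext i
  rw [Finset.mem_filter]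
  simp only [Finset.mem_filter, Finset.mem_range, Finset.mem_Icc, lab, Ne]
  split_ifs <;> (try simp_all) <;> omega

lemma filter_bb {m p q : ℕ} (hmp : m ≤ p) (hpq : p < q) (hq : q < 2*m) :
    ((Finset.range m).filter (fun i => lab m i p ≠ lab m i q)) = Finset.Icc (p-m) (q-m) := by
  ext i
  rw [Finset.mem_filter]
  simp only [Finset.mem_filter, Finset.mem_range, Finset.mem_Icc, lab, Ne]
  split_ifs <;> (try simp_all) <;> omega

lemma filter_ab_lt {m p q : ℕ} (hp : p < m) (hq : m ≤ q) (hq2 : q < 2*m) (hlt : p < q - m) :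
    ((Finset.range m).filter (fun i => lab m i p = lab m i q)) = Finset.Ioo p (q-m) := by
  ext i
  rw [Finset.mem_filter]
  simp only [Finset.mem_filter, Finset.mem_range, Finset.mem_Ioo, lab]
  split_ifs <;> (try simp_all) <;> omega

lemma filter_ab_eq {m p q : ℕ} (hp : p < m) (hq : m ≤ q) (hq2 : q < 2*m) (heq : p = q - m) :
    ((Finset.range m).filter (fun i => lab m i p = lab m i q)) = {p} := by
  ext i
  rw [Finset.mem_filter]
  simp only [Finset.mem_filter, Finset.mem_range, Finset.mem_singleton, lab]
  split_ifs <;> (try simp) <;> omega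

lemma filter_ab_gt {m p q : ℕ} (hp : p < m) (hq : m ≤ q) (hq2 : q < 2*m) (hgt : q - m < p) :
    ((Finset.range m).filter (fun i => lab m i p = lab m i q)) = Finset.Ioo (q-m) p := by
  ext i
  rw [Finset.mem_filter]
  simp only [Finset.mem_filter, Finset.mem_range, Finset.mem_Ioo, lab]
  split_ifs <;> (try simp_all) <;> omega

lemma count_parity_lt {m p q : ℕ} (hm : 1 ≤ m) (hq : q < 2*m) (hpq : p < q) :
    (((Finset.range m).filter (fun i => lab m i p ≠ lab m i q)).card) % 2 = (1 + p + q) % 2 := by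
  have hsum := Finset.card_filter_add_card_filter_not
    (s := Finset.range m) (p := fun i => lab m i p = lab m i q)
  rw [Finset.card_range] at hsum
  have hneg : ((Finset.range m).filter (fun i => ¬ lab m i p = lab m i q))
      = ((Finset.range m).filter (fun i => lab m i p ≠ lab m i q)) := rfl
  rw [hneg] at hsum
  rcases lt_or_ge q m with hqm | hqm
  · rw [filter_aa hpq hqm, Nat.card_Icc]; omega
  · rcases lt_or_ge p m with hpm | hpm
    · -- a-b case
      rcases lt_trichotomy p (q - m) with h | h | h
      · rw [filter_ab_lt hpm hqm hq h, Nat.card_Ioo] at hsum; omega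
      · rw [filter_ab_eq hpm hqm hq h, Finset.card_singleton] at hsum; omega
      · rw [filter_ab_gt hpm hqm hq h, Nat.card_Ioo] at hsum; omega
    · rw [filter_bb hpm hpq hq, Nat.card_Icc]; omega

lemma count_parity {m p q : ℕ} (hm : 1 ≤ m) (hp : p < 2*m) (hq : q < 2*m) (hne : p ≠ q) :
    (((Finset.range m).filter (fun i => lab m i p ≠ lab m i q)).card) % 2 = (1 + p + q) % 2 := by
  rcases lt_or_gt_of_ne hne with h | h
  · exact count_parity_lt hm hq h
  · have hswap : ((Finset.range m).filter (fun i => lab m i p ≠ lab m i q))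
        = ((Finset.range m).filter (fun i => lab m i q ≠ lab m i p)) := by
      apply Finset.filter_congr; intro i _; exact ne_comm
    rw [hswap]
    have := count_parity_lt hm hp h
    omega

lemma natKey {a b c : ℕ} (ha : a < 3) (hb : b < 3) (hc : c < 3) :
    (∀ k, k < 3 → ((if a = k then 1 else 0) + ((if b = k then 1 else 0)
      + (if c = k then 1 else 0)) = 1)) ↔ (a ≠ b ∧ a ≠ c ∧ b ≠ c) := by
  interval_cases a <;> interval_cases b <;> interval_cases c <;> decide

lemma zmodKey {a b c : ℕ} (ha : a < 3) (hb : b < 3) (hc : c < 3) :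
    (if (a ≠ b ∧ a ≠ c ∧ b ≠ c) then (1 : ZMod 2) else 0)
      = (if a ≠ b then (1 : ZMod 2) else 0) + (if a ≠ c then (1 : ZMod 2) else 0)
        + (if b ≠ c then (1 : ZMod 2) else 0) := by
  interval_cases a <;> interval_cases b <;> interval_cases c <;> decide

def Hfam (n : ℕ) [NeZero n] (i : Fin (n / 2)) (j : Fin 3) : Finset (ZMod n) :=
  Finset.univ.filter (fun v => lab (n / 2) i.val v.val = j.val)

/-- For every even `n ≥ 4`, there is a family of `n/2` complete 3-partite 3-graphs on
vertex set `ZMod n` covering every 3-set an odd number of times. -/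
theorem stmt0 (n : ℕ) (hn : 4 ≤ n) (he : Even n) :
    ∃ H : Fin (n / 2) → Fin 3 → Finset (ZMod n),
      (∀ i, Pairwise (Function.onFun Disjoint (H i))) ∧
      ∀ e : Finset (ZMod n), e.card = 3 →
        Odd ((Finset.univ.filter fun i => IsEdge (H i) e).card) := by
  have hmod : n % 2 = 0 := Nat.even_iff.mp he
  have hn2 : n = 2 * (n / 2) := by omega
  have hm1 : 1 ≤ n / 2 := by omega
  haveI : NeZero n := ⟨by omega⟩
  refine ⟨Hfam n, ?_, ?_⟩
  · intro i j k hjk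
    simp only [Function.onFun, Hfam]
    refine Finset.disjoint_left.mpr fun v hv hv' => ?_
    simp only [Finset.mem_filter] at hv hv'
    exact hjk (Fin.ext (by omega))
  · intro e he3
    obtain ⟨x, y, z, hxy, hxz, hyz, rfl⟩ := Finset.card_eq_three.mp he3
    have valinj : ∀ a b : ZMod n, a.val = b.val → a = b := by
      intro a b h
      have ha := ZMod.natCast_rightInverse (n := n) a
      have hb := ZMod.natCast_rightInverse (n := n) b
      rw [← ha, ← hb, h]
    have hvxy : x.val ≠ y.val := fun h => hxy (valinj _ _ h)
    have hvxz : x.val ≠ z.val := fun h => hxz (valinj _ _ h)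
    have hvyz : y.val ≠ z.val := fun h => hyz (valinj _ _ h)
    have hvlt : ∀ a : ZMod n, a.val < 2 * (n / 2) := fun a => by
      rw [← hn2]; exact ZMod.val_lt a
    -- edge characterization
    have hedge : ∀ i : Fin (n / 2),
        IsEdge (Hfam n i) {x, y, z} ↔
          (lab (n/2) i.val x.val ≠ lab (n/2) i.val y.val ∧
           lab (n/2) i.val x.val ≠ lab (n/2) i.val z.val ∧
           lab (n/2) i.val y.val ≠ lab (n/2) i.val z.val) := by
      intro i
      have hcard : ∀ j : Fin 3,
          (({x, y, z} : Finset (ZMod n)) ∩ Hfam n i j).card =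
            (if lab (n/2) i.val x.val = j.val then 1 else 0) +
            ((if lab (n/2) i.val y.val = j.val then 1 else 0) +
             (if lab (n/2) i.val z.val = j.val then 1 else 0)) := by
        intro j
        have h1 : ({x, y, z} : Finset (ZMod n)) ∩ Hfam n i j
            = ({x, y, z} : Finset (ZMod n)).filter
                (fun v => lab (n/2) i.val v.val = j.val) := by
          ext v
          simp [Hfam, Finset.mem_inter, Finset.mem_filter]
          skip
        rw [h1, Finset.card_filter]
        rw [show ({x, y, z} : Finset (ZMod n)) = insert x (insert y ({z} : Finset (ZMod n))) from rfl]
        rw [Finset.sum_insert (by simp [hxy, hxz]), Finset.sum_insert (by simp [hyz]),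
          Finset.sum_singleton]
      rw [← natKey (lab_lt3 _ _ _) (lab_lt3 _ _ _) (lab_lt3 _ _ _)]
      constructor
      · intro h k hk
        have := h ⟨k, hk⟩
        rwa [hcard ⟨k, hk⟩] at this
      · intro h j
        rw [hcard j]
        exact h j.val j.isLt
    -- parity computation
    have pair : ∀ u v : ZMod n, u.val ≠ v.val →
        (∑ i : Fin (n / 2),
          if lab (n/2) i.val u.val ≠ lab (n/2) i.val v.val then (1 : ZMod 2) else 0)
          = ((1 + u.val + v.val : ℕ) : ZMod 2) := by
      intro u v huv
      rw [Fin.sum_univ_eq_sum_range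
        (fun k => if lab (n/2) k u.val ≠ lab (n/2) k v.val then (1 : ZMod 2) else 0) (n / 2)]
      have hc : (∑ k ∈ Finset.range (n / 2),
          if lab (n/2) k u.val ≠ lab (n/2) k v.val then (1 : ZMod 2) else 0)
          = ((((Finset.range (n / 2)).filter
              (fun k => lab (n/2) k u.val ≠ lab (n/2) k v.val)).card : ℕ) : ZMod 2) := by
        rw [Finset.card_filter, Nat.cast_sum]
        exact (Finset.sum_congr rfl fun k _ => by split_ifs <;> simp).symm
      rw [hc, ZMod.natCast_eq_natCast_iff]
      exact count_parity hm1 (hvlt u) (hvlt v) huv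
    have hCsum : (((Finset.univ.filter fun i : Fin (n / 2) => IsEdge (Hfam n i) {x, y, z}).card : ℕ) : ZMod 2)
        = (((1 + x.val + y.val) + ((1 + x.val + z.val) + (1 + y.val + z.val)) : ℕ) : ZMod 2) := by
      rw [Finset.card_filter, Nat.cast_sum]
      have step1 : ∀ i : Fin (n / 2), ((if IsEdge (Hfam n i) {x, y, z} then (1:ℕ) else 0 : ℕ) : ZMod 2)
          = (if lab (n/2) i.val x.val ≠ lab (n/2) i.val y.val then (1 : ZMod 2) else 0) +
            (if lab (n/2) i.val x.val ≠ lab (n/2) i.val z.val then (1 : ZMod 2) else 0) +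
            (if lab (n/2) i.val y.val ≠ lab (n/2) i.val z.val then (1 : ZMod 2) else 0) := by
        intro i
        rw [if_congr (hedge i) rfl rfl]
        rw [← zmodKey (lab_lt3 _ _ _) (lab_lt3 _ _ _) (lab_lt3 _ _ _)]
        split_ifs <;> simp
      rw [Finset.sum_congr rfl fun i _ => step1 i]
      rw [Finset.sum_add_distrib, Finset.sum_add_distrib]
      rw [pair x y hvxy, pair x z hvxz, pair y z hvyz]
      push_cast
      ring
    have hmodeq := (ZMod.natCast_eq_natCast_iff _ _ _).mp hCsum
    have : ((Finset.univ.filter fun i : Fin (n / 2) => IsEdge (Hfam n i) {x, y, z}).card) % 2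
        = ((1 + x.val + y.val) + ((1 + x.val + z.val) + (1 + y.val + z.val))) % 2 := hmodeq
    rw [Nat.odd_iff]
    omega
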